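/- For p > 1 and 𝐛 ∈ ℝ^n with 𝐛 ≠ 0, sup_{𝐚∈ℝ^n} ( ⟨𝐚,𝐛⟩ − (1/p)‖𝐚‖_tr^p ) = ((p−1)/p) · ζ(𝐛)^{p/(p−1)}, where ζ(𝐛) = max_{S⊆{1,…,n}} |∑_{i∈S} b_i|. -/

import Mathlib

noncomputable def tropNorm {n : ℕ} (a : Fin n → ℝ) : ℝ :=
  Finset.fold max 0 a Finset.univ - Finset.fold min 0 a Finset.univ

noncomputable def zeta {n : ℕ} (b : Fin n → ℝ) : ℝ :=
  Finset.univ.powerset.sup' ⟨∅, Finset.empty_mem_powerset _⟩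
    (fun S => |∑ i ∈ S, b i|)

lemma abs_sum_le_zeta {n : ℕ} (b : Fin n → ℝ) (S : Finset (Fin n)) :
    |∑ i ∈ S, b i| ≤ zeta b := by
  unfold zeta
  exact Finset.le_sup' (fun S => |∑ i ∈ S, b i|) (Finset.mem_powerset.2 (Finset.subset_univ S))

lemma zeta_pos {n : ℕ} (b : Fin n → ℝ) (hb : b ≠ 0) : 0 < zeta b := by
  obtain ⟨i, hi⟩ : ∃ i, b i ≠ 0 := Function.ne_iff.1 hb
  have h := abs_sum_le_zeta b {i}
  simp only [Finset.sum_singleton] at h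
  exact lt_of_lt_of_le (abs_pos.2 hi) h

lemma inner_le_zeta_mul {n : ℕ} (b a : Fin n → ℝ) :
    ∑ i, b i * a i ≤ zeta b * tropNorm a := by
  set M := Finset.fold max 0 a Finset.univ with hM
  set m := Finset.fold min 0 a Finset.univ with hm
  have hM0 : 0 ≤ M := (Finset.le_fold_max _).2 (Or.inl le_rfl)
  have hm0 : m ≤ 0 := (Finset.fold_min_le _).2 (Or.inl le_rfl)
  have haM : ∀ i, a i ≤ M := fun i =>
    (Finset.le_fold_max _).2 (Or.inr ⟨i, Finset.mem_univ i, le_rfl⟩)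
  have hma : ∀ i, m ≤ a i := fun i =>
    (Finset.fold_min_le _).2 (Or.inr ⟨i, Finset.mem_univ i, le_rfl⟩)
  set Sp := Finset.univ.filter (fun i => 0 < b i) with hSp
  have hsplit : ∑ i, b i * a i = ∑ i ∈ Sp, b i * a i + ∑ i ∈ Spᶜ, b i * a i :=
    (Finset.sum_add_sum_compl Sp _).symm
  have h1 : ∑ i ∈ Sp, b i * a i ≤ M * ∑ i ∈ Sp, b i := by
    rw [Finset.mul_sum]
    refine Finset.sum_le_sum fun i hi => ?_
    have hbi : 0 < b i := (Finset.mem_filter.1 hi).2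
    nlinarith [haM i]
  have h2 : ∑ i ∈ Spᶜ, b i * a i ≤ m * ∑ i ∈ Spᶜ, b i := by
    rw [Finset.mul_sum]
    refine Finset.sum_le_sum fun i hi => ?_
    have hbi : b i ≤ 0 := by
      have := Finset.mem_compl.1 hi
      simp only [hSp, Finset.mem_filter, Finset.mem_univ, true_and, not_lt] at this
      exact this
    nlinarith [hma i]
  have hP : ∑ i ∈ Sp, b i ≤ zeta b :=
    le_trans (le_abs_self _) (abs_sum_le_zeta b Sp)
  have hN : -(∑ i ∈ Spᶜ, b i) ≤ zeta b :=
    le_trans (neg_le_abs _) (abs_sum_le_zeta b Spᶜ)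
  have ht : tropNorm a = M - m := rfl
  rw [ht, hsplit]
  nlinarith [mul_le_mul_of_nonneg_left hP hM0,
    mul_le_mul_of_nonneg_left hN (neg_nonneg.2 hm0)]

theorem hamiltonian_p_gt_one {n : ℕ} (p : ℝ) (hp : 1 < p)
    (b : Fin n → ℝ) (hb : b ≠ 0) :
    sSup { r : ℝ | ∃ a : Fin n → ℝ, r = ∑ i, b i * a i - (1 / p) * tropNorm a ^ p }
      = ((p - 1) / p) * zeta b ^ (p / (p - 1)) := by
  have hp0 : (0:ℝ) < p := lt_trans one_pos hp
  have hp1 : (0:ℝ) < p - 1 := by linarith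
  have hpq : p.HolderConjugate (p / (p - 1)) := .conjExponent hp
  set q : ℝ := p / (p - 1) with hq
  set ζ := zeta b with hζdef
  have hζ : 0 < ζ := zeta_pos b hb
  set V : ℝ := ((p - 1) / p) * ζ ^ q with hV
  have hVq : V = ζ ^ q / q := by
    rw [hV, hq]
    field_simp
  -- upper bound
  have hub : ∀ r ∈ { r : ℝ | ∃ a : Fin n → ℝ,
      r = ∑ i, b i * a i - (1 / p) * tropNorm a ^ p }, r ≤ V := by
    rintro r ⟨a, rfl⟩
    have h1 : ∑ i, b i * a i ≤ ζ * tropNorm a := inner_le_zeta_mul b a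
    have ht0 : 0 ≤ tropNorm a := by
      have hM0 : 0 ≤ Finset.fold max 0 a Finset.univ := (Finset.le_fold_max _).2 (Or.inl le_rfl)
      have hm0 : Finset.fold min 0 a Finset.univ ≤ 0 := (Finset.fold_min_le _).2 (Or.inl le_rfl)
      unfold tropNorm; linarith
    have hyoung : tropNorm a * ζ ≤ tropNorm a ^ p / p + ζ ^ q / q :=
      Real.young_inequality_of_nonneg ht0 hζ.le hpq
    rw [hVq]
    have : (1/p) * tropNorm a ^ p = tropNorm a ^ p / p := by ring
    nlinarith
  -- attainment
  have hmem : V ∈ { r : ℝ | ∃ a : Fin n → ℝ,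
      r = ∑ i, b i * a i - (1 / p) * tropNorm a ^ p } := by
    have hex : ∃ S ∈ (Finset.univ : Finset (Fin n)).powerset, zeta b = |∑ i ∈ S, b i| := by
      unfold zeta
      exact Finset.exists_mem_eq_sup' _ _
    obtain ⟨S, hS, hζS⟩ := hex
    set t : ℝ := ζ ^ ((1:ℝ) / (p - 1)) with htdef
    have ht : 0 < t := Real.rpow_pos_of_pos hζ _
    have hSne : S.Nonempty := by
      rcases S.eq_empty_or_nonempty with h | h
      · exfalso; rw [h] at hζS; simp at hζS; linarith [hζS ▸ hζ]
      · exact h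
    obtain ⟨i₁, hi₁⟩ := hSne
    set s : ℝ := if 0 ≤ ∑ i ∈ S, b i then 1 else -1 with hsdef
    refine ⟨fun i => if i ∈ S then s * t else 0, ?_⟩
    have hsum : ∑ i, b i * (if i ∈ S then s * t else 0) = ζ * t := by
      have : ∀ i, b i * (if i ∈ S then s * t else 0)
          = if i ∈ S then b i * (s * t) else 0 := by
        intro i; by_cases h : i ∈ S <;> simp [h]
      simp_rw [this]
      rw [Finset.sum_ite_mem, Finset.univ_inter, ← Finset.sum_mul]
      rw [hζdef, hζS, hsdef]
      by_cases h : 0 ≤ ∑ i ∈ S, b i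
      · rw [if_pos h, abs_of_nonneg h]; ring
      · rw [if_neg h, abs_of_neg (not_le.1 h)]; ring
    have htrop : tropNorm (fun i => if i ∈ S then s * t else 0) = t := by
      have hscases : s = 1 ∨ s = -1 := by
        rw [hsdef]; by_cases h : 0 ≤ ∑ i ∈ S, b i <;> simp [h]
      rcases hscases with h | h
      · have hMax : Finset.fold max 0 (fun i => if i ∈ S then s * t else 0) Finset.univ = t := by
          apply le_antisymm
          · exact (Finset.fold_max_le _).2 ⟨ht.le, fun i _ => by
              by_cases hi : i ∈ S <;> simp [hi, h, ht.le]⟩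
          · exact (Finset.le_fold_max _).2 (Or.inr ⟨i₁, Finset.mem_univ _, by simp [hi₁, h]⟩)
        have hMin : Finset.fold min 0 (fun i => if i ∈ S then s * t else 0) Finset.univ = 0 := by
          apply le_antisymm
          · exact (Finset.fold_min_le _).2 (Or.inl le_rfl)
          · exact (Finset.le_fold_min _).2 ⟨le_rfl, fun i _ => by
              by_cases hi : i ∈ S <;> simp [hi, h, ht.le]⟩
        unfold tropNorm; rw [hMax, hMin]; ring
      · have hMax : Finset.fold max 0 (fun i => if i ∈ S then s * t else 0) Finset.univ = 0 := by
          apply le_antisymm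
          · exact (Finset.fold_max_le _).2 ⟨le_rfl, fun i _ => by
              by_cases hi : i ∈ S <;> simp [hi, h, ht.le]⟩
          · exact (Finset.le_fold_max _).2 (Or.inl le_rfl)
        have hMin : Finset.fold min 0 (fun i => if i ∈ S then s * t else 0) Finset.univ = -t := by
          apply le_antisymm
          · exact (Finset.fold_min_le _).2 (Or.inr ⟨i₁, Finset.mem_univ _, by simp [hi₁, h]⟩)
          · exact (Finset.le_fold_min _).2 ⟨by linarith, fun i _ => by
              by_cases hi : i ∈ S <;> simp [hi, h, ht.le]⟩
        unfold tropNorm; rw [hMax, hMin]; ring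
    rw [hsum, htrop]
    have htp : t ^ p = ζ ^ q := by
      rw [htdef, ← Real.rpow_mul hζ.le]
      congr 1
      rw [hq]; field_simp
    have hζt : ζ * t = ζ ^ q := by
      have hq1 : q = (1:ℝ) + 1 / (p - 1) := by rw [hq]; field_simp; ring
      rw [hq1, Real.rpow_add hζ, Real.rpow_one, htdef]
    rw [htp, hζt, hVq, hq]
    field_simp
  exact le_antisymm (csSup_le ⟨V, hmem⟩ hub) (le_csSup ⟨V, hub⟩ hmem)
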